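/- For n ≥ 3, the large rank of the semigroup 𝒪_n of order-preserving singular selfmaps of [n] is r₅(𝒪_n) = C(2n − 1, n − 1) − n + 1, where C denotes the binomial coefficient. -/

import Mathlib

/-- The semigroup `𝒪ₙ` of order-preserving singular (non-bijective) selfmaps of
`[n] = {1, …, n}`, encoded as maps `Fin n → Fin n`.  Composition is applied
left to right: `(f * g) x = g (f x)`. -/
def OrderSing (n : ℕ) : Type :=
  {f : Fin n → Fin n // Monotone f ∧ ¬ Function.Bijective f}

instance (n : ℕ) : Semigroup (OrderSing n) where
  mul f g := ⟨g.1 ∘ f.1, g.2.1.comp f.2.1, fun h =>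
    f.2.2 ((Finite.injective_iff_bijective).mp (Function.Injective.of_comp h.1))⟩
  mul_assoc _ _ _ := rfl

/-!
Write `σ_p δ_m` for the map of rank `n - 1` that identifies `p` with `p + 1` and misses `m`.
Since `σ_p δ_a * σ_b δ_m = σ_p δ_m` whenever `a ∈ {b, b + 1}`, a subsemigroup `T` avoiding
`σ_p δ_m` also avoids `σ_p δ_b` and `σ_p δ_{b+1}` whenever `σ_b δ_m ∈ T`; counting along row `p`
and column `m` shows that `T` then misses at least `n - 1` elements. So a subset missing at most
`n - 2` elements of `𝒪ₙ` generates every map of rank `n - 1`, and these generate `𝒪ₙ`: if `f` has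
a nontrivial fibre `[a, b]` with value `v`, then `f = σ_a δ_a * g` if `a < v` and
`f = σ_{b-1} δ_b * g` if `v < b`, where `g` moves the value at `a` (resp. `b`) one step towards
the diagonal. Conversely, the maps whose image is not `{1, …, n - 1}` form a subsemigroup that
misses only the `n - 1` maps `σ_p δ_n`. Finally `|𝒪ₙ| = C(2n - 1, n - 1) - 1` by stars and bars.
-/

open Function

theorem Monotone.eq_id_of_bijective {α : Type*} [LinearOrder α] [WellFoundedLT α] {f : α → α}
    (hf : Monotone f) (hb : Bijective f) : f = id :=
  congrArg (⇑) (Subsingleton.elim ((hf.strictMono_of_injective hb.1).orderIsoOfSurjective f hb.2)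
    (OrderIso.refl α))

theorem Monotone.update {α β : Type*} [LinearOrder α] [DecidableEq α] [Preorder β]
    {f : α → β} (hf : Monotone f) {a : α} {w : β} (hl : ∀ x < a, f x ≤ w)
    (hr : ∀ x, a < x → w ≤ f x) : Monotone (update f a w) := by
  intro x y hxy
  by_cases hx : x = a <;> by_cases hy : y = a
  · simp [hx, hy]
  · simpa [hx, hy] using hr y (lt_of_le_of_ne (hx ▸ hxy) (Ne.symm hy))
  · simpa [hx, hy] using hl x (lt_of_le_of_ne (hy ▸ hxy) hx)
  · simpa [hx, hy] using hf hxy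

theorem Function.update_comp_update_id {α β : Type*} [DecidableEq α] {f : α → β} {a a' : α}
    (h : a' ≠ a) (hf : f a' = f a) (w : β) : update f a w ∘ update id a a' = f := by
  funext x
  rcases eq_or_ne x a with rfl | hx
  · simp [h, hf]
  · simp [hx]

theorem Monotone.exists_nontrivial_fiber_ends {α β : Type*} [LinearOrder α] [Fintype α]
    [LinearOrder β] {f : α → β} (hf : Monotone f) (hi : ¬ Injective f) :
    ∃ a b, a < b ∧ f a = f b ∧ (∀ x < a, f x < f a) ∧ ∀ x, b < x → f b < f x := by
  classical
  obtain ⟨x, y, hxy, hne⟩ := not_injective_iff.1 hi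
  set s := Finset.univ.filter fun z => f z = f x
  have hx : x ∈ s := by simp [s]
  have hy : y ∈ s := by simp [s, hxy]
  have ha : f (s.min' ⟨x, hx⟩) = f x := (Finset.mem_filter.1 (s.min'_mem _)).2
  have hb : f (s.max' ⟨x, hx⟩) = f x := (Finset.mem_filter.1 (s.max'_mem _)).2
  refine ⟨_, _, s.min'_lt_max' hx hy hne, ha.trans hb.symm, fun z hz => ?_, fun z hz => ?_⟩
  · refine (hf hz.le).lt_of_ne fun h => hz.not_ge (s.min'_le z ?_)
    simp [s, h, ha]
  · refine (hf hz.le).lt_of_ne fun h => hz.not_ge (s.le_max' z ?_)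
    simp [s, ← h, hb]

namespace Fin

theorem predAbove_succ_succAbove {n : ℕ} (p i : Fin n) :
    p.predAbove (p.succ.succAbove i) = i := by
  rcases le_or_gt i p with h | h
  · rw [succAbove_of_castSucc_lt _ _ (castSucc_lt_succ_iff.2 h), predAbove_castSucc_of_le _ _ h]
  · rw [succAbove_of_le_castSucc _ _ (succ_le_castSucc_iff.2 h), predAbove_succ_of_le _ _ h.le]

theorem exists_eq_predAbove_of_monotone_of_surjective {n : ℕ} {g : Fin (n + 1) → Fin n}
    (hg : Monotone g) (hs : Surjective g) : ∃ p : Fin n, g = p.predAbove := by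
  rcases n with _ | n
  · exact (g 0).elim0
  have : CategoryTheory.Epi (SimplexCategory.mkHom ⟨g, hg⟩) :=
    SimplexCategory.epi_iff_surjective.2 hs
  obtain ⟨p, hp⟩ := SimplexCategory.eq_σ_of_epi (SimplexCategory.mkHom ⟨g, hg⟩)
  exact ⟨p, congrArg (fun θ : SimplexCategory.mk (n + 1) ⟶ SimplexCategory.mk n =>
    (θ.toOrderHom : Fin (n + 2) → Fin (n + 1))) hp⟩

theorem card_lt_card_map_castSucc_union_map_succ {n : ℕ} {B : Finset (Fin n)} (hB : B.Nonempty) :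
    B.card < (B.map castSuccEmb ∪ B.map (succEmb n)).card := by
  refine (Finset.card_map _).symm.trans_lt (Finset.card_lt_card
    (Finset.ssubset_iff_of_subset Finset.subset_union_left |>.2 ⟨(B.max' hB).succ,
      Finset.mem_union_right _ (Finset.mem_map_of_mem _ (B.max'_mem hB)), fun h => ?_⟩))
  obtain ⟨b, hb, hbmax⟩ := Finset.mem_map.1 h
  have hb' : b.castSucc = (B.max' hB).succ := hbmax
  have := (B.max' hB).castSucc_lt_succ
  rw [← hb', castSucc_lt_castSucc_iff] at this
  exact (B.le_max' b hb).not_gt this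

theorem val_sub_val_le_of_strictMono {k M : ℕ} {f : Fin k → Fin M} (hf : StrictMono f)
    {i j : Fin k} (hij : i ≤ j) : (j : ℕ) - i ≤ f j - f i := by
  have := Finset.card_le_card_of_injOn f (s := Finset.Icc i j) (t := Finset.Icc (f i) (f j))
    (fun x hx => by
      simp only [Finset.coe_Icc, Set.mem_Icc] at hx ⊢
      exact ⟨hf.monotone hx.1, hf.monotone hx.2⟩) hf.injective.injOn
  simp only [card_Icc] at this
  omega

theorem orderEmbedding_apply_bounds {k M : ℕ} (f : Fin k ↪o Fin M) (i : Fin k) :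
    (i : ℕ) ≤ f i ∧ (f i : ℕ) + k ≤ M + i := by
  have h₀ := val_sub_val_le_of_strictMono (f := f) f.strictMono (i := ⟨0, i.pos⟩) (j := i)
    (Nat.zero_le _)
  have h₁ := val_sub_val_le_of_strictMono (f := f) f.strictMono (i := i)
    (j := ⟨k - 1, by omega⟩) (Nat.le_sub_one_of_lt i.isLt)
  have := (f ⟨k - 1, by omega⟩).isLt
  dsimp only at h₀ h₁
  omega

def monotoneEquivOrderEmbedding (k m : ℕ) :
    {f : Fin k → Fin (m + 1) // Monotone f} ≃ (Fin k ↪o Fin (m + k)) where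
  toFun f := OrderEmbedding.ofStrictMono (fun i => ⟨f.1 i + i, by omega⟩) fun i j hij => by
    have := f.2 hij.le
    simp only [lt_def, le_def] at hij this ⊢
    omega
  invFun e := ⟨fun i => ⟨e i - i, by have := orderEmbedding_apply_bounds e i; omega⟩,
    fun i j hij => by
      have h₁ : (j : ℕ) - i ≤ e j - e i := val_sub_val_le_of_strictMono e.strictMono hij
      have h₂ := orderEmbedding_apply_bounds e i
      have h₃ : (e i : ℕ) ≤ e j := e.monotone hij
      show (e i : ℕ) - i ≤ (e j : ℕ) - j
      omega⟩
  left_inv f := by ext i; exact Nat.add_sub_cancel ..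
  right_inv e := by
    ext i
    have := orderEmbedding_apply_bounds e i
    show (e i : ℕ) - i + i = e i
    omega

theorem card_monotone (k m : ℕ) :
    Nat.card {f : Fin k → Fin (m + 1) // Monotone f} = (m + k).choose k := by
  rw [Nat.card_congr ((monotoneEquivOrderEmbedding k m).trans Set.powersetCard.ofFinEmbEquiv),
    Set.powersetCard.card, Nat.card_fin]

end Fin

namespace OrderSing

variable {n : ℕ}

instance : Finite (OrderSing n) :=
  inferInstanceAs (Finite {f : Fin n → Fin n // Monotone f ∧ ¬ Bijective f})

@[ext] theorem ext {f g : OrderSing n} (h : f.1 = g.1) : f = g := Subtype.ext h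

theorem mul_val (f g : OrderSing n) : (f * g).1 = g.1 ∘ f.1 := rfl

theorem card_add_one (n : ℕ) : Nat.card (OrderSing (n + 1)) + 1 = (2 * n + 1).choose n := by
  let idMono : {f : Fin (n + 1) → Fin (n + 1) // Monotone f} := ⟨id, monotone_id⟩
  have hne (f : Fin (n + 1) → Fin (n + 1)) (hf : Monotone f) : ¬ Bijective f ↔ f ≠ id :=
    ⟨fun hb h => hb (h ▸ bijective_id), fun h hb => h (hf.eq_id_of_bijective hb)⟩
  have e : OrderSing (n + 1) ≃ {f // f ≠ idMono} :=
    (Equiv.subtypeEquivRight fun f => and_congr_right (hne f)).trans <|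
    (Equiv.subtypeSubtypeEquivSubtypeInter _ fun f => f ≠ id).symm.trans <|
    Equiv.subtypeEquivRight fun f => by simp [idMono, Subtype.ext_iff]
  rw [Nat.card_congr e, ← Finite.card_option, Nat.card_congr (Equiv.optionSubtypeNe idMono),
    Fin.card_monotone, ← Nat.choose_symm_half]
  congr 1
  omega

/-- `σ_p δ_m`, that is `σ p ≫ δ m` in the simplex category. -/
def collapseSkip (p : Fin n) (m : Fin (n + 1)) : OrderSing (n + 1) :=
  ⟨m.succAbove ∘ p.predAbove,
    (Fin.strictMono_succAbove m).monotone.comp p.predAbove_right_monotone,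
    fun h => p.castSucc_lt_succ.ne (h.1 (by simp))⟩

theorem collapseSkip_val (p : Fin n) (m : Fin (n + 1)) :
    (collapseSkip p m).1 = m.succAbove ∘ p.predAbove := rfl

theorem collapseSkip_castSucc_val (c : Fin n) :
    (collapseSkip c c.castSucc).1 = update id c.castSucc c.succ := by
  funext x
  rcases eq_or_ne x c.castSucc with rfl | hx
  · simp [collapseSkip_val]
  · simp [collapseSkip_val, hx]

theorem collapseSkip_succ_val (c : Fin n) :
    (collapseSkip c c.succ).1 = update id c.succ c.castSucc := by
  funext x
  rcases eq_or_ne x c.succ with rfl | hx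
  · simp [collapseSkip_val]
  · simp [collapseSkip_val, hx]

theorem collapseSkip_mul_collapseSkip {p b : Fin n} {a m : Fin (n + 1)}
    (ha : a = b.castSucc ∨ a = b.succ) :
    collapseSkip p a * collapseSkip b m = collapseSkip p m := by
  ext1
  funext x
  rcases ha with rfl | rfl <;> simp [mul_val, collapseSkip_val, Fin.predAbove_succ_succAbove]

theorem range_collapseSkip (p : Fin n) (m : Fin (n + 1)) :
    Set.range (collapseSkip p m).1 = {m}ᶜ := by
  rw [collapseSkip_val, (Fin.predAbove_surjective p).range_comp, Fin.range_succAbove]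

theorem collapseSkip_injective2 : Injective2 (collapseSkip (n := n)) := by
  intro p p' m m' h
  have hm : m = m' := by
    simpa [range_collapseSkip] using congrArg (fun f : OrderSing (n + 1) => Set.range f.1) h
  subst hm
  exact ⟨Fin.predAbove_left_injective (Fin.succAbove_right_injective.comp_left
    (congrArg Subtype.val h)), rfl⟩

def displacement (f : Fin n → Fin n) : ℕ := ∑ x : Fin n, Nat.dist x (f x)

theorem displacement_update_lt {f : Fin n → Fin n} {a w : Fin n}
    (h : Nat.dist a w < Nat.dist a (f a)) : displacement (update f a w) < displacement f := by
  refine Finset.sum_lt_sum (fun x _ => ?_) ⟨a, Finset.mem_univ a, by simpa using h⟩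
  rcases eq_or_ne x a with rfl | hx
  · simpa using h.le
  · simp [hx]

theorem eq_or_eq_mul_of_comp {e f : OrderSing n} {g : Fin n → Fin n} (hg : Monotone g)
    (h : g ∘ e.1 = f.1) : f = e ∨ ∃ g' : OrderSing n, g'.1 = g ∧ f = e * g' := by
  by_cases hb : Bijective g
  · rw [hg.eq_id_of_bijective hb] at h
    exact Or.inl (ext h.symm)
  · exact Or.inr ⟨⟨g, hg, hb⟩, rfl, ext h.symm⟩

theorem exists_comp_collapseSkip_castSucc_eq {f : OrderSing (n + 1)} {a b : Fin (n + 1)}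
    (hab : a < b) (hfab : f.1 a = f.1 b) (hl : ∀ x < a, f.1 x < f.1 a) (hv : a < f.1 a) :
    ∃ c : Fin n, ∃ g, Monotone g ∧ displacement g < displacement f.1 ∧
      g ∘ (collapseSkip c c.castSucc).1 = f.1 := by
  set c := a.castPred (Fin.ne_last_of_lt hab)
  have hc : c.castSucc = a := Fin.castSucc_castPred _ _
  have hsucc : f.1 c.succ = f.1 a := le_antisymm
    (hfab ▸ f.2.1 (Fin.castSucc_lt_iff_succ_le.1 (hc ▸ hab)))
    (hc ▸ f.2.1 c.castSucc_le_succ)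
  have hv : (a : ℕ) < f.1 a := hv
  let w : Fin (n + 1) := ⟨f.1 a - 1, by omega⟩
  refine ⟨c, update f.1 a w, f.2.1.update (fun x hx => ?_) (fun x hx => ?_),
    displacement_update_lt ?_, ?_⟩
  · have : (f.1 x : ℕ) < f.1 a := hl x hx
    exact Fin.le_def.2 (by simp only [w]; omega)
  · have : (f.1 a : ℕ) ≤ f.1 x := f.2.1 hx.le
    exact Fin.le_def.2 (by simp only [w]; omega)
  · simp only [Nat.dist, w]
    omega
  · rw [collapseSkip_castSucc_val, hc]
    exact update_comp_update_id (hc ▸ c.castSucc_lt_succ).ne' hsucc w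

theorem exists_comp_collapseSkip_succ_eq {f : OrderSing (n + 1)} {a b : Fin (n + 1)}
    (hab : a < b) (hfab : f.1 a = f.1 b) (hr : ∀ x, b < x → f.1 b < f.1 x) (hv : f.1 b < b) :
    ∃ c : Fin n, ∃ g, Monotone g ∧ displacement g < displacement f.1 ∧
      g ∘ (collapseSkip c c.succ).1 = f.1 := by
  set c := b.pred (Fin.ne_zero_of_lt hab)
  have hc : c.succ = b := Fin.succ_pred _ _
  have hcast : f.1 c.castSucc = f.1 b := le_antisymm
    (hc ▸ f.2.1 c.castSucc_le_succ)
    (hfab ▸ f.2.1 ((Fin.le_castSucc_pred_iff _).2 hab))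
  have hv : (f.1 b : ℕ) < b := hv
  let w : Fin (n + 1) := ⟨f.1 b + 1, by omega⟩
  refine ⟨c, update f.1 b w, f.2.1.update (fun x hx => ?_) (fun x hx => ?_),
    displacement_update_lt ?_, ?_⟩
  · have : (f.1 x : ℕ) ≤ f.1 b := f.2.1 hx.le
    exact Fin.le_def.2 (by simp only [w]; omega)
  · have : (f.1 b : ℕ) < f.1 x := hr x hx
    exact Fin.le_def.2 (by simp only [w]; omega)
  · simp only [Nat.dist, w]
    omega
  · rw [collapseSkip_succ_val, hc]
    exact update_comp_update_id (hc ▸ c.castSucc_lt_succ).ne hcast w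

theorem exists_comp_idempotent_eq (f : OrderSing (n + 1)) :
    ∃ c : Fin n, ∃ e ∈ ({collapseSkip c c.castSucc, collapseSkip c c.succ} : Set _),
      ∃ g, Monotone g ∧ displacement g < displacement f.1 ∧ g ∘ e.1 = f.1 := by
  obtain ⟨a, b, hab, hfab, hl, hr⟩ :=
    f.2.1.exists_nontrivial_fiber_ends fun h => f.2.2 (Finite.injective_iff_bijective.1 h)
  by_cases hv : a < f.1 a
  · obtain ⟨c, hc⟩ := exists_comp_collapseSkip_castSucc_eq hab hfab hl hv
    exact ⟨c, _, Or.inl rfl, hc⟩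
  · obtain ⟨c, hc⟩ := exists_comp_collapseSkip_succ_eq hab hfab hr
      (hfab ▸ (not_lt.1 hv).trans_lt hab)
    exact ⟨c, _, Or.inr rfl, hc⟩

theorem eq_top_of_idempotents_mem {T : Subsemigroup (OrderSing (n + 1))}
    (hu : ∀ c, collapseSkip c c.castSucc ∈ T) (hd : ∀ c, collapseSkip c c.succ ∈ T) :
    T = ⊤ := by
  refine (Subsemigroup.eq_top_iff' T).2 fun f => ?_
  induction hN : displacement f.1 using Nat.strong_induction_on generalizing f with
  | _ N ih =>
  obtain ⟨c, e, he, g, hg, hlt, hcomp⟩ := exists_comp_idempotent_eq f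
  have heT : e ∈ T := by
    rcases he with rfl | rfl
    exacts [hu c, hd c]
  rcases eq_or_eq_mul_of_comp hg hcomp with rfl | ⟨g, rfl, rfl⟩
  · exact heT
  · exact T.mul_mem heT (ih _ (hN ▸ hlt) g rfl)

theorem collapseSkip_notMem_of_mul {T : Subsemigroup (OrderSing (n + 1))} {p b : Fin n}
    {a m : Fin (n + 1)} (hpm : collapseSkip p m ∉ T) (hbm : collapseSkip b m ∈ T)
    (ha : a = b.castSucc ∨ a = b.succ) : collapseSkip p a ∉ T :=
  fun h => hpm (collapseSkip_mul_collapseSkip ha ▸ T.mul_mem h hbm)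

theorem collapseSkip_mem_of_ncard_compl_lt {T : Subsemigroup (OrderSing (n + 1))}
    (hT : (T : Set (OrderSing (n + 1)))ᶜ.ncard < n) (p : Fin n) (m : Fin (n + 1)) :
    collapseSkip p m ∈ T := by
  classical
  by_contra hpm
  set B := Finset.univ.filter fun b : Fin n => collapseSkip b m ∈ T
  set R := Finset.univ.filter fun a : Fin (n + 1) => collapseSkip p a ∉ T
  have hBR : B.map Fin.castSuccEmb ∪ B.map (Fin.succEmb n) ⊆ R := by
    intro a ha
    refine Finset.mem_filter.2 ⟨Finset.mem_univ _, ?_⟩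
    obtain ⟨b, hb, rfl⟩ | ⟨b, hb, rfl⟩ :=
      (Finset.mem_union.1 ha).imp Finset.mem_map.1 Finset.mem_map.1
    · exact collapseSkip_notMem_of_mul hpm (Finset.mem_filter.1 hb).2 (Or.inl rfl)
    · exact collapseSkip_notMem_of_mul hpm (Finset.mem_filter.1 hb).2 (Or.inr rfl)
  have hR : B.card < R.card := by
    rcases B.eq_empty_or_nonempty with hB | hB
    · rw [hB, Finset.card_empty, Finset.card_pos]
      exact ⟨m, by simpa [R] using hpm⟩
    · exact (Fin.card_lt_card_map_castSucc_union_map_succ hB).trans_le (Finset.card_le_card hBR)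
  set C := Bᶜ.erase p
  have hC : C.card + 1 + B.card = n := by
    rw [Finset.card_erase_add_one (by simpa [B] using hpm), Finset.card_compl_add_card,
      Fintype.card_fin]
  have hdisj : Disjoint (R.image (collapseSkip p)) (C.image (collapseSkip · m)) := by
    simp only [Finset.disjoint_left, Finset.mem_image]
    rintro _ ⟨a, -, rfl⟩ ⟨b, hb, h⟩
    exact (Finset.mem_erase.1 hb).1 (collapseSkip_injective2 h).1
  have hsub : (↑(R.image (collapseSkip p) ∪ C.image (collapseSkip · m)) : Set _) ⊆
      (T : Set (OrderSing (n + 1)))ᶜ := by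
    intro f hf
    obtain ⟨a, ha, rfl⟩ | ⟨b, hb, rfl⟩ :=
      (Finset.mem_union.1 hf).imp Finset.mem_image.1 Finset.mem_image.1
    · exact (Finset.mem_filter.1 ha).2
    · simpa [B] using (Finset.mem_erase.1 hb).2
  have := (Set.ncard_le_ncard hsub).trans_lt hT
  rw [Set.ncard_coe_finset, Finset.card_union_of_disjoint hdisj,
    Finset.card_image_of_injective _ (collapseSkip_injective2.right p),
    Finset.card_image_of_injective _ (collapseSkip_injective2.left m)] at this
  omega

theorem closure_eq_top_of_ncard_compl_lt {U : Set (OrderSing (n + 1))} (hU : Uᶜ.ncard < n) :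
    Subsemigroup.closure U = ⊤ := by
  have hT : (Subsemigroup.closure U : Set (OrderSing (n + 1)))ᶜ.ncard < n :=
    (Set.ncard_le_ncard (Set.compl_subset_compl.2 Subsemigroup.subset_closure)).trans_lt hU
  exact eq_top_of_idempotents_mem (fun _ => collapseSkip_mem_of_ncard_compl_lt hT _ _)
    (fun _ => collapseSkip_mem_of_ncard_compl_lt hT _ _)

def rangeNeCompl (m : Fin (n + 1)) : Subsemigroup (OrderSing (n + 1)) where
  carrier := {f | Set.range f.1 ≠ {m}ᶜ}
  mul_mem' {f g} _ hg hfg := by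
    have hsub : {m}ᶜ ⊆ Set.range g.1 := hfg ▸ Set.range_comp_subset_range f.1 g.1
    have hm : m ∉ Set.range g.1 := fun hm => g.2.2 (Finite.surjective_iff_bijective.1 fun y =>
      if hy : y = m then hy ▸ hm else hsub hy)
    exact hg (Set.Subset.antisymm (fun y hy (h : y = m) => hm (h ▸ hy)) hsub)

theorem collapseSkip_notMem_rangeNeCompl (p : Fin n) (m : Fin (n + 1)) :
    collapseSkip p m ∉ rangeNeCompl m :=
  fun h => h (range_collapseSkip p m)

theorem eq_collapseSkip_of_range_eq {f : OrderSing (n + 1)} {m : Fin (n + 1)}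
    (h : Set.range f.1 = {m}ᶜ) : ∃ p, f = collapseSkip p m := by
  have hf (x) : f.1 x ≠ m := (h ▸ Set.mem_range_self x :)
  choose g hg using fun x => Fin.exists_succAbove_eq (hf x)
  have hmono : Monotone g := fun x y hxy =>
    (Fin.strictMono_succAbove m).le_iff_le.1 (by rw [hg, hg]; exact f.2.1 hxy)
  have hsurj : Surjective g := fun z => by
    obtain ⟨x, hx⟩ : m.succAbove z ∈ Set.range f.1 := h ▸ Fin.succAbove_ne m z
    exact ⟨x, Fin.succAbove_right_injective ((hg x).trans hx)⟩
  obtain ⟨p, rfl⟩ := Fin.exists_eq_predAbove_of_monotone_of_surjective hmono hsurj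
  exact ⟨p, ext (funext fun x => (hg x).symm)⟩

theorem exists_card_eq_closure_ne_top (hn : 0 < n) {k : ℕ}
    (hk : k + n ≤ Nat.card (OrderSing (n + 1))) :
    ∃ U : Finset (OrderSing (n + 1)), U.card = k ∧
      Subsemigroup.closure (U : Set (OrderSing (n + 1))) ≠ ⊤ := by
  set M := rangeNeCompl (Fin.last n)
  have hMc : (M : Set (OrderSing (n + 1)))ᶜ.ncard ≤ n := by
    refine (Set.ncard_le_ncard fun f hf => ?_).trans_eq ((Set.ncard_range_of_injective
      (collapseSkip_injective2.left (Fin.last n))).trans (Nat.card_fin _))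
    simpa [eq_comm] using eq_collapseSkip_of_range_eq (not_not.1 hf)
  obtain ⟨V, hVM, hV⟩ := Set.exists_subset_card_eq (s := (M : Set (OrderSing (n + 1)))) (n := k)
    (by have := Set.ncard_add_ncard_compl (M : Set (OrderSing (n + 1))); omega)
  refine ⟨V.toFinite.toFinset, (Set.ncard_eq_toFinset_card V).symm.trans hV, fun htop => ?_⟩
  have hle : Subsemigroup.closure (V.toFinite.toFinset : Set _) ≤ M :=
    Subsemigroup.closure_le.2 (by simpa using hVM)
  exact collapseSkip_notMem_rangeNeCompl ⟨0, hn⟩ _ (hle (htop ▸ Subsemigroup.mem_top _))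

end OrderSing

/-- For `n ≥ 3`, the large rank of the semigroup `𝒪ₙ` of order-preserving singular
selfmaps of `[n]` — the least `k` such that every subset of cardinality `k`
generates `𝒪ₙ` — equals `C(2n - 1, n - 1) - n + 1`. -/
theorem largeRank_orderSing (n : ℕ) (hn : 3 ≤ n) :
    IsLeast {k : ℕ | ∀ U : Finset (OrderSing n), U.card = k →
        Subsemigroup.closure (U : Set (OrderSing n)) = ⊤}
      (Nat.choose (2 * n - 1) (n - 1) - n + 1) := by
  obtain ⟨n, rfl⟩ : ∃ k, n = k + 1 := ⟨n - 1, by omega⟩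
  have hbig : n + 1 ≤ Nat.card (OrderSing (n + 1)) := by
    simpa using Nat.card_le_card_of_injective _
      (OrderSing.collapseSkip_injective2.right (⟨0, by omega⟩ : Fin n))
  rw [show 2 * (n + 1) - 1 = 2 * n + 1 by omega, Nat.add_sub_cancel, ← OrderSing.card_add_one]
  refine ⟨fun U hU => OrderSing.closure_eq_top_of_ncard_compl_lt ?_, fun k hk => ?_⟩
  · rw [Set.ncard_compl, Set.ncard_coe_finset, hU]
    omega
  · by_contra! hlt
    obtain ⟨U, hU, hne⟩ :=
      OrderSing.exists_card_eq_closure_ne_top (n := n) (k := k) (by omega) (by omega)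
    exact hne (hk U hU)
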